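/- Let n be a positive integer, let 0 < c ≤ A, let d be a positive integer, and let v = (v₁, …, v_d) ∈ [-c, c]^d. Apply the stochastic n-bit quantization mechanism independently to each coordinate: for each j, with u = 2^n - 1 and p_j = (A + v_j)/(2A), draw K_j ~ Binomial(u, p_j) independently and output M(v)_j = ((2K_j - u)/u) · A. Then M(v) is an unbiased estimator of v and the total variance satisfies Σ_{j=1}^d Var[M(v)_j] = (dA² - ‖v‖₂²)/(2^n - 1), where ‖v‖₂² = Σ_j v_j². -/

import Mathlib

/-!
The output of the quantizer is the affine image `(2K - u)/u · A` of `K ~ Bin(u, p)` with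
`p = (A + v)/(2A)`. Hence its mean is `(2p - 1) A = v` and its variance is
`(2A/u)² · u p (1 - p) = (A² - v²)/u`. The binomial moments `E K = u p` and
`Var K = u p (1 - p)` are the Bernstein polynomial identities evaluated at `p`.
-/

open MeasureTheory ProbabilityTheory Polynomial
open scoped unitInterval

/-- The law of the stochastic `n`-bit quantizer output `((2K - u)/u) · A`, where
`K ~ Binomial(u, (A + v)/(2A))`. -/
noncomputable def quantLaw (A v : ℝ) (u : ℕ) : Measure ℝ :=
  ∑ k ∈ Finset.range (u + 1),
    (((u.choose k : ℝ) * ((A + v) / (2 * A)) ^ k *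
        (1 - (A + v) / (2 * A)) ^ (u - k)).toNNReal) •
      Measure.dirac ((2 * (k : ℝ) - (u : ℝ)) / (u : ℝ) * A)

namespace ProbabilityTheory

lemma integral_id_map_cast_binomial (n : ℕ) (p : I) :
    ∫ x, x ∂Bin(ℝ, n, p) = n * p := by
  rw [integral_map_cast_binomial, ← Nat.range_succ_eq_Iic]
  have := congrArg (eval (p : ℝ)) (bernsteinPolynomial.sum_smul (R := ℝ) n)
  simpa [eval_finsetSum, bernsteinPolynomial, mul_comm] using this

lemma variance_id_map_cast_binomial (n : ℕ) (p : I) :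
    Var[id; Bin(ℝ, n, p)] = n * p * (1 - p) := by
  rw [variance_eq_integral measurable_id.aemeasurable, integral_map_cast_binomial,
    ← Nat.range_succ_eq_Iic]
  have := congrArg (eval (p : ℝ)) (bernsteinPolynomial.variance (R := ℝ) n)
  simp only [eval_finsetSum, bernsteinPolynomial, eval_mul, eval_pow, eval_sub, eval_X,
    eval_one, eval_natCast, nsmul_eq_mul] at this
  simp only [id_eq, integral_id_map_cast_binomial, smul_eq_mul]
  rw [← this]
  exact Finset.sum_congr rfl fun k _ ↦ by ring

end ProbabilityTheory

section Quantizer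

variable {A v : ℝ} {u : ℕ}

noncomputable def quantProb (hA : 0 < A) (hv : v ∈ Set.Icc (-A) A) : I :=
  ⟨(A + v) / (2 * A), div_nonneg (by linarith [hv.1]) (by positivity),
    (div_le_one (by positivity)).2 (by linarith [hv.2])⟩

lemma coe_quantProb (hA : 0 < A) (hv : v ∈ Set.Icc (-A) A) :
    (quantProb hA hv : ℝ) = (A + v) / (2 * A) :=
  rfl

lemma quantLaw_eq_map_binomial (hA : 0 < A) (hv : v ∈ Set.Icc (-A) A) :
    quantLaw A v u = Bin(ℝ, u, quantProb hA hv).map (fun x ↦ (2 * x - u) / u * A) := by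
  have hf : Measurable fun x : ℝ ↦ (2 * x - u) / u * A := by fun_prop
  rw [map_cast_binomial_eq_sum_dirac, Measure.map_finset_sum hf.aemeasurable,
    ← Nat.range_succ_eq_Iic]
  refine Finset.sum_congr rfl fun k _ ↦ ?_
  rw [Measure.map_smul, Measure.map_dirac' hf]
  -- `ENNReal.ofReal r` is `↑r.toNNReal`, and `ℝ≥0` acts on measures through `ℝ≥0∞`.
  rfl

lemma quantizer_map_eq_affine (hu : u ≠ 0) :
    (fun x : ℝ ↦ (2 * x - u) / u * A) = fun x ↦ 2 * A / u * x - A := by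
  funext x
  field_simp

lemma integral_id_quantLaw (hA : 0 < A) (hv : v ∈ Set.Icc (-A) A) (hu : u ≠ 0) :
    ∫ x, x ∂quantLaw A v u = v := by
  rw [quantLaw_eq_map_binomial hA hv, integral_map (by fun_prop) (by fun_prop),
    quantizer_map_eq_affine hu,
    integral_sub (integrable_map_cast_binomial _) (integrable_const A), integral_const_mul,
    integral_const, probReal_univ, one_smul, integral_id_map_cast_binomial, coe_quantProb]
  field_simp
  ring

lemma variance_id_quantLaw (hA : 0 < A) (hv : v ∈ Set.Icc (-A) A) (hu : u ≠ 0) :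
    Var[id; quantLaw A v u] = (A ^ 2 - v ^ 2) / u := by
  rw [quantLaw_eq_map_binomial hA hv, variance_map (by fun_prop) (by fun_prop),
    Function.id_comp, quantizer_map_eq_affine hu, variance_sub_const (by fun_prop),
    variance_const_mul, ← Function.id_def, variance_id_map_cast_binomial, coe_quantProb]
  field_simp
  ring

end Quantizer

theorem stochastic_quantizer_vector_unbiased_variance_general (n d : ℕ) (hn : 0 < n)
    (A c : ℝ) (hc : 0 < c) (hcA : c ≤ A) (v : Fin d → ℝ)
    (hv : ∀ j, v j ∈ Set.Icc (-c) c) :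
    (∀ j, ∫ x, x ∂(quantLaw A (v j) (2 ^ n - 1)) = v j) ∧
      ∑ j, ProbabilityTheory.variance id (quantLaw A (v j) (2 ^ n - 1)) =
        ((d : ℝ) * A ^ 2 - ∑ j, (v j) ^ 2) / ((2 : ℝ) ^ n - 1) := by
  have hA : 0 < A := hc.trans_le hcA
  have hvA : ∀ j, v j ∈ Set.Icc (-A) A := fun j ↦
    Set.Icc_subset_Icc (neg_le_neg hcA) hcA (hv j)
  have hu : 2 ^ n - 1 ≠ 0 := by
    have := Nat.one_lt_two_pow hn.ne'
    omega
  have hcast : ((2 ^ n - 1 : ℕ) : ℝ) = 2 ^ n - 1 := by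
    rw [Nat.cast_sub Nat.one_le_two_pow]
    push_cast
    rfl
  refine ⟨fun j ↦ integral_id_quantLaw hA (hvA j) hu, ?_⟩
  rw [Finset.sum_congr rfl fun j _ ↦ variance_id_quantLaw hA (hvA j) hu, hcast,
    ← Finset.sum_div, Finset.sum_sub_distrib]
  simp

/-- Coordinate-wise stochastic `n`-bit quantization of a vector `v ∈ [-c, c]^d` is unbiased,
and its total variance is `(dA² - ‖v‖₂²)/(2ⁿ - 1)`. -/
theorem stochastic_quantizer_vector_unbiased_variance (n d : ℕ) (hn : 0 < n) (hd : 0 < d)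
    (A c : ℝ) (hc : 0 < c) (hcA : c ≤ A) (v : Fin d → ℝ)
    (hv : ∀ j, v j ∈ Set.Icc (-c) c) :
    (∀ j, ∫ x, x ∂(quantLaw A (v j) (2 ^ n - 1)) = v j) ∧
      ∑ j, ProbabilityTheory.variance id (quantLaw A (v j) (2 ^ n - 1)) =
        ((d : ℝ) * A ^ 2 - ∑ j, (v j) ^ 2) / ((2 : ℝ) ^ n - 1) :=
  stochastic_quantizer_vector_unbiased_variance_general n d hn A c hc hcA v hv
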